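/- arXiv:1903.08747 — 3 statements merged into one kernel-verified Lean document; each statement's English description precedes it below -/
import Mathlib

section
/- Let c > 0 and θ ≤ 0, and let Z have density proportional to φ(z-θ)·1_{z > c} (a normal N(θ, 1) truncated to z > c). Then the one-sided p-value P⁺ = 1 - Φ(Z) is stochastically larger than the uniform distribution on [0, 1-Φ(c)], that is, for all t ∈ [0, 1-Φ(c)], ℙ[1 - Φ(Z) ≤ t] ≤ t/(1-Φ(c)). -/
open MeasureTheory ProbabilityTheory

open Real Set Filter

noncomputable def tpsPhi (x : ℝ) : ℝ := gaussianPDFReal 0 1 x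

lemma tpsPhi_eq (x : ℝ) : tpsPhi x = (Real.sqrt (2 * π))⁻¹ * Real.exp (-x ^ 2 / 2) := by
  simp [tpsPhi, gaussianPDFReal]

lemma tpsPhi_pos (x : ℝ) : 0 < tpsPhi x := gaussianPDFReal_pos 0 1 x one_ne_zero

lemma tpsPhi_cont : Continuous tpsPhi := by
  have : Continuous fun x : ℝ => (Real.sqrt (2 * π))⁻¹ * Real.exp (-x ^ 2 / 2) := by
    continuity
  simpa [funext tpsPhi_eq] using this

lemma tpsPhi_integrable : Integrable tpsPhi := integrable_gaussianPDFReal 0 1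

lemma tpsPhi_hasDeriv (x : ℝ) : HasDerivAt tpsPhi (-x * tpsPhi x) x := by
  have h1 : HasDerivAt (fun y : ℝ => -y ^ 2 / 2) (-x) x := by
    have := ((hasDerivAt_pow 2 x).neg).div_const 2
    simpa using this.congr_deriv (by ring)
  have h2 : HasDerivAt (fun y : ℝ => Real.exp (-y ^ 2 / 2)) (Real.exp (-x ^ 2 / 2) * -x) x :=
    (Real.hasDerivAt_exp _).comp x h1
  have h3 := h2.const_mul (Real.sqrt (2 * π))⁻¹
  have : HasDerivAt (fun y : ℝ => (Real.sqrt (2 * π))⁻¹ * Real.exp (-y ^ 2 / 2))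
      (-x * ((Real.sqrt (2 * π))⁻¹ * Real.exp (-x ^ 2 / 2))) x := by
    exact h3.congr_deriv (by ring)
  rw [tpsPhi_eq]
  exact this.congr_of_eventuallyEq (by filter_upwards with y; rw [tpsPhi_eq])

noncomputable def tpsN (x : ℝ) : ℝ := ((gaussianReal 0 1) (Set.Ioi x)).toReal

lemma tpsN_eq (x : ℝ) : tpsN x = ∫ u in Ioi x, tpsPhi u := by
  rw [tpsN, gaussianReal_apply_eq_integral 0 one_ne_zero,
    ENNReal.toReal_ofReal (setIntegral_nonneg measurableSet_Ioi
      fun u _ => gaussianPDFReal_nonneg 0 1 u)]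
  rfl

lemma tpsN_pos (x : ℝ) : 0 < tpsN x := by
  rw [tpsN_eq]
  rw [setIntegral_pos_iff_support_of_nonneg_ae
    (ae_of_all _ fun u => (tpsPhi_pos u).le) tpsPhi_integrable.integrableOn]
  have : Function.support tpsPhi = univ := by
    ext u; simp [Function.support, (tpsPhi_pos u).ne']
  rw [this, univ_inter]
  simp [Real.volume_Ioi]

lemma tpsN_hasDeriv (x : ℝ) : HasDerivAt tpsN (-(tpsPhi x)) x := by
  have heq : ∀ y : ℝ, tpsN y = tpsN 0 - ∫ t in (0:ℝ)..y, tpsPhi t := by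
    intro y
    have h0 : tpsN 0 = (∫ u, tpsPhi u) - ∫ u in Iic (0:ℝ), tpsPhi u := by
      rw [tpsN_eq, eq_sub_iff_add_eq, add_comm, ← intervalIntegral.integral_Iic_add_Ioi
        tpsPhi_integrable.integrableOn tpsPhi_integrable.integrableOn]
    have hy : tpsN y = (∫ u, tpsPhi u) - ∫ u in Iic y, tpsPhi u := by
      rw [tpsN_eq, eq_sub_iff_add_eq, add_comm, ← intervalIntegral.integral_Iic_add_Ioi
        tpsPhi_integrable.integrableOn tpsPhi_integrable.integrableOn]
    rw [h0, hy, ← intervalIntegral.integral_Iic_sub_Iic tpsPhi_integrable.integrableOn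
      tpsPhi_integrable.integrableOn]
    ring
  have hd : HasDerivAt (fun y => ∫ t in (0:ℝ)..y, tpsPhi t) (tpsPhi x) x :=
    intervalIntegral.integral_hasDerivAt_right (tpsPhi_cont.intervalIntegrable 0 x)
      tpsPhi_cont.aestronglyMeasurable.stronglyMeasurableAtFilter tpsPhi_cont.continuousAt
  have := (hasDerivAt_const x (tpsN 0)).sub hd
  simp only [zero_sub] at this
  exact this.congr_of_eventuallyEq (by filter_upwards with y; rw [heq y]; rfl)

lemma tpsPhi_tendsto : Tendsto tpsPhi atTop (nhds 0) := by
  have h : Tendsto (fun x : ℝ => -x ^ 2 / 2) atTop atBot := by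
    apply Filter.Tendsto.atBot_div_const (by norm_num)
    simpa using (tendsto_pow_atTop (two_ne_zero)).neg
  have := (Real.tendsto_exp_atBot.comp h).const_mul (Real.sqrt (2 * π))⁻¹
  simpa [funext tpsPhi_eq, Function.comp] using this

lemma tps_integral_id_mul {x : ℝ} (hx : 0 < x) :
    ∫ u in Ioi x, u * tpsPhi u = tpsPhi x := by
  have hderiv : ∀ y ∈ Ioi x, HasDerivAt (fun u => -(tpsPhi u)) (y * tpsPhi y) y := by
    intro y _
    exact (tpsPhi_hasDeriv y).neg.congr_deriv (by ring)
  have := integral_Ioi_of_hasDerivAt_of_nonneg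
    ((tpsPhi_cont.neg).continuousWithinAt) hderiv
    (fun y hy => mul_nonneg (le_trans hx.le (le_of_lt hy)) (tpsPhi_pos y).le)
    (tpsPhi_tendsto.neg)
  simpa using this

lemma tps_integrable_id_mul {x : ℝ} (hx : 0 < x) :
    IntegrableOn (fun u => u * tpsPhi u) (Ioi x) := by
  have hderiv : ∀ y ∈ Ioi x, HasDerivAt (fun u => -(tpsPhi u)) (y * tpsPhi y) y := by
    intro y _
    exact (tpsPhi_hasDeriv y).neg.congr_deriv (by ring)
  exact integrableOn_Ioi_deriv_of_nonneg ((tpsPhi_cont.neg).continuousWithinAt) hderiv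
    (fun y hy => mul_nonneg (le_trans hx.le (le_of_lt hy)) (tpsPhi_pos y).le)
    (tpsPhi_tendsto.neg)

lemma tps_key (x : ℝ) : x * tpsN x ≤ tpsPhi x := by
  rcases le_or_gt x 0 with hx | hx
  · exact le_trans (mul_nonpos_of_nonpos_of_nonneg hx (tpsN_pos x).le) (tpsPhi_pos x).le
  · rw [tpsN_eq, ← integral_const_mul, ← tps_integral_id_mul hx]
    apply setIntegral_mono_on (tpsPhi_integrable.integrableOn.const_mul x)
      (tps_integrable_id_mul hx) measurableSet_Ioi
    intro u hu
    exact mul_le_mul_of_nonneg_right (le_of_lt hu) (tpsPhi_pos u).le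

lemma tps_mills_anti : Antitone (fun x => tpsN x / tpsPhi x) := by
  apply antitone_of_hasDerivAt_nonpos
    (f' := fun x => ((-(tpsPhi x)) * tpsPhi x - tpsN x * (-x * tpsPhi x)) / (tpsPhi x) ^ 2)
  · intro x
    exact (tpsN_hasDeriv x).div (tpsPhi_hasDeriv x) (tpsPhi_pos x).ne'
  · intro x
    apply div_nonpos_of_nonpos_of_nonneg _ (sq_nonneg _)
    have h := tps_key x
    nlinarith [tpsPhi_pos x, tpsN_pos x]

lemma tps_hazard {a : ℝ} (ha : 0 ≤ a) (x : ℝ) :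
    tpsPhi x * tpsN (x + a) ≤ tpsPhi (x + a) * tpsN x := by
  have h := tps_mills_anti (le_add_of_nonneg_right ha : x ≤ x + a)
  rw [div_le_div_iff₀ (tpsPhi_pos (x + a)) (tpsPhi_pos x)] at h
  linarith [h]

lemma tps_ratio_anti {a : ℝ} (ha : 0 ≤ a) : Antitone (fun x => tpsN (x + a) / tpsN x) := by
  apply antitone_of_hasDerivAt_nonpos
    (f' := fun x => ((-(tpsPhi (x + a))) * tpsN x - tpsN (x + a) * (-(tpsPhi x))) / (tpsN x) ^ 2)
  · intro x
    have hshift : HasDerivAt (fun y => tpsN (y + a)) (-(tpsPhi (x + a))) x := by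
      have := (tpsN_hasDeriv (x + a)).comp x ((hasDerivAt_id x).add_const a)
      exact this.congr_deriv (by ring)
    exact hshift.div (tpsN_hasDeriv x) (tpsN_pos x).ne'
  · intro x
    apply div_nonpos_of_nonpos_of_nonneg _ (sq_nonneg _)
    have h := tps_hazard ha x
    nlinarith

lemma tps_main {a c q : ℝ} (ha : 0 ≤ a) (hcq : c ≤ q) :
    tpsN (q + a) * tpsN c ≤ tpsN q * tpsN (c + a) := by
  have h := tps_ratio_anti ha hcq
  rw [div_le_div_iff₀ (tpsN_pos q) (tpsN_pos c)] at h
  linarith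

lemma tpsN_strictAnti : StrictAnti tpsN :=
  strictAnti_of_hasDerivAt_neg tpsN_hasDeriv (fun x => neg_neg_iff_pos.mpr (tpsPhi_pos x))

lemma tpsN_cont : Continuous tpsN :=
  continuous_iff_continuousAt.mpr fun x => (tpsN_hasDeriv x).continuousAt

lemma tpsN_tendsto : Tendsto tpsN atTop (nhds 0) := by
  have hub : ∀ᶠ x : ℝ in atTop, tpsN x ≤ tpsPhi x / x := by
    filter_upwards [eventually_gt_atTop (0:ℝ)] with x hx
    rw [le_div_iff₀ hx]
    calc tpsN x * x = x * tpsN x := by ring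
    _ ≤ tpsPhi x := tps_key x
  have hlim : Tendsto (fun x : ℝ => tpsPhi x / x) atTop (nhds 0) := by
    have := tpsPhi_tendsto.div_atTop (tendsto_id (α := ℝ))
    simpa using this
  exact tendsto_of_tendsto_of_tendsto_of_le_of_le'
    tendsto_const_nhds hlim (Eventually.of_forall fun x => (tpsN_pos x).le) hub

lemma tps_shift (θ x : ℝ) : (gaussianReal θ 1) (Set.Ioi x) = ENNReal.ofReal (tpsN (x - θ)) := by
  have hmap : (gaussianReal 0 1).map (· + θ) = gaussianReal θ 1 := by
    simpa using gaussianReal_map_add_const (μ := 0) (v := 1) θ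
  rw [← hmap, Measure.map_apply (measurable_add_const θ) measurableSet_Ioi]
  have : (· + θ) ⁻¹' Set.Ioi x = Set.Ioi (x - θ) := by
    ext z; simp [lt_sub_iff_add_lt, sub_lt_iff_lt_add]
  rw [this, ← ENNReal.ofReal_toReal (measure_ne_top _ _)]
  rfl

lemma tps_Phi_eq (Φ : ℝ → ℝ) (hΦ : Φ = fun x => ((gaussianReal 0 1) (Set.Iic x)).toReal)
    (x : ℝ) : 1 - Φ x = tpsN x := by
  have h1 : (gaussianReal 0 1) (Set.Iic x) + (gaussianReal 0 1) (Set.Ioi x) = 1 := by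
    rw [← measure_union (Set.Iic_disjoint_Ioi le_rfl) measurableSet_Ioi,
      Set.Iic_union_Ioi, measure_univ]
  have h2 := congrArg ENNReal.toReal h1
  rw [ENNReal.toReal_add (measure_ne_top _ _) (measure_ne_top _ _)] at h2
  simp only [ENNReal.toReal_one] at h2
  rw [hΦ]
  simp only [tpsN]
  linarith

/-- Let `Z ~ N(θ, 1)` conditioned on (i.e. truncated to) the event `Z > c`, where `c > 0`.
Under the null `θ ≤ 0`, the one-sided p-value `1 - Φ(Z)` is stochastically larger than the
uniform distribution on `[0, 1 - Φ(c)]`: for all `t ∈ [0, 1 - Φ(c)]`,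
`ℙ[1 - Φ(Z) ≤ t] ≤ t / (1 - Φ(c))`.  Here `Φ` is the standard normal CDF. -/
theorem truncated_pvalue_superuniform (θ c : ℝ) (hc : 0 < c) (hθ : θ ≤ 0)
    (Φ : ℝ → ℝ) (hΦ : Φ = fun x => ((gaussianReal 0 1) (Set.Iic x)).toReal)
    (law : Measure ℝ)
    (hlaw : law = (((gaussianReal θ 1) (Set.Ioi c))⁻¹ •
      (gaussianReal θ 1).restrict (Set.Ioi c))) :
    ∀ t ∈ Set.Icc (0:ℝ) (1 - Φ c),
      law {z | 1 - Φ z ≤ t} ≤ ENNReal.ofReal (t / (1 - Φ c)) := by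
  intro t ht
  obtain ⟨ht0, ht1⟩ := ht
  have hPN : ∀ x, 1 - Φ x = tpsN x := tps_Phi_eq Φ hΦ
  have hset : {z | 1 - Φ z ≤ t} = {z | tpsN z ≤ t} := by
    ext z; have := hPN z; constructor <;> intro <;> simp_all <;> linarith
  rw [hset]
  rcases eq_or_lt_of_le ht0 with rfl | htpos
  · have : {z : ℝ | tpsN z ≤ 0} = ∅ := by
      ext z; simp [not_le.mpr (tpsN_pos z)]
    simp [this]
  · rw [hPN c] at ht1
    -- find q ≥ c with tpsN q = t
    obtain ⟨M, hM⟩ := ((tendsto_order.mp tpsN_tendsto).2 t htpos).and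
      (eventually_ge_atTop c) |>.exists
    obtain ⟨hMt, hcM⟩ := hM
    obtain ⟨q, hqmem, hqt⟩ := intermediate_value_Icc' hcM
      (tpsN_cont.continuousOn) (Set.mem_Icc.mpr ⟨hMt.le, ht1⟩)
    have hcq : c ≤ q := hqmem.1
    have hIci : {z : ℝ | tpsN z ≤ t} = Set.Ici q := by
      ext z
      simp only [Set.mem_setOf_eq, Set.mem_Ici, ← hqt]
      exact tpsN_strictAnti.le_iff_ge
    rw [hIci, hlaw, Measure.smul_apply, Measure.restrict_apply measurableSet_Ici, smul_eq_mul]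
    have hinter : (gaussianReal θ 1) (Set.Ici q ∩ Set.Ioi c) = (gaussianReal θ 1) (Set.Ioi q) := by
      apply le_antisymm
      · calc (gaussianReal θ 1) (Set.Ici q ∩ Set.Ioi c) ≤ (gaussianReal θ 1) (Set.Ici q) :=
          measure_mono Set.inter_subset_left
        _ ≤ (gaussianReal θ 1) (Set.Ioi q ∪ {q}) := measure_mono (by
            intro z hz
            rcases eq_or_lt_of_le (Set.mem_Ici.mp hz) with rfl | h
            · exact Or.inr rfl
            · exact Or.inl h)
        _ ≤ (gaussianReal θ 1) (Set.Ioi q) + (gaussianReal θ 1) {q} := measure_union_le _ _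
        _ = (gaussianReal θ 1) (Set.Ioi q) := by
            rw [gaussianReal_absolutelyContinuous θ one_ne_zero (volume_singleton), add_zero]
      · apply measure_mono
        intro z hz
        exact ⟨Set.mem_Ici.mpr (le_of_lt hz), lt_of_le_of_lt hcq hz⟩
    rw [hinter, tps_shift θ q, tps_shift θ c, ← ENNReal.div_eq_inv_mul,
      ← ENNReal.ofReal_div_of_pos (tpsN_pos (c - θ))]
    apply ENNReal.ofReal_le_ofReal
    rw [hPN c, div_le_div_iff₀ (tpsN_pos (c - θ)) (tpsN_pos c), ← hqt]
    have := tps_main (a := -θ) (neg_nonneg.mpr hθ) hcq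
    have hq' : q - θ = q + -θ := by ring
    have hc' : c - θ = c + -θ := by ring
    rw [hq', hc']
    linarith
end

section
/- Fix N₀ ≥ 0, T ≥ 0, β ∈ (0,1). If V is a random variable with 0 ≤ V ≤ N₀ and V ≤_st Binomial(N₀, 1-β), and B ≥ N₀ - V almost surely, then E[((1-β)/β)·B/(V+T)] ≥ E[V/(V+T)], provided V + T > 0 almost surely. -/
/-!
Write `Y = V + T` and `A = (1 - β) N₀ + T`. Pointwise,
`((1-β)/β)(N₀ - V)/Y - V/Y = (A / Y - 1) / β`, so it suffices that `A · E[1/Y] ≥ 1`.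
Jensen's inequality for `y ↦ 1/y` gives `E[Y] · E[1/Y] ≥ 1`, and stochastic domination by
`Binomial(N₀, 1-β)` gives `E[V] ≤ (1-β) N₀`, i.e. `E[Y] ≤ A`; the bound `B ≥ N₀ - V` finishes.
-/

open MeasureTheory

/-- `ℙ[Binomial(n, p) ≥ t]` for a natural threshold `t`. -/
noncomputable def binomTail (n : ℕ) (p : ℝ) (t : ℕ) : ℝ :=
  ∑ k ∈ Finset.Icc t n, (n.choose k : ℝ) * p ^ k * (1 - p) ^ (n - k)

open Finset

lemma natCast_eq_sum_Icc_ite {n k : ℕ} (hk : k ≤ n) :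
    (k : ℝ) = ∑ t ∈ Icc 1 n, if t ≤ k then 1 else 0 := by
  rw [sum_boole, show {t ∈ Icc 1 n | t ≤ k} = Icc 1 k by ext; simp; omega, Nat.card_Icc,
    Nat.add_sub_cancel]

lemma binomTail_eq_sum_ite (n : ℕ) (p : ℝ) (t : ℕ) :
    binomTail n p t =
      ∑ k ∈ range (n + 1), if t ≤ k then (n.choose k : ℝ) * p ^ k * (1 - p) ^ (n - k) else 0 := by
  rw [binomTail, ← sum_filter]
  congr 1
  ext; simp; omega

lemma binomTail_nonneg {p : ℝ} (hp₀ : 0 ≤ p) (hp₁ : p ≤ 1) (n t : ℕ) : 0 ≤ binomTail n p t :=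
  sum_nonneg fun _ _ => by have := sub_nonneg.2 hp₁; positivity

lemma sum_binomial_mul_eq (n : ℕ) (p : ℝ) :
    ∑ k ∈ range (n + 1), (k : ℝ) * ((n.choose k : ℝ) * p ^ k * (1 - p) ^ (n - k)) = n * p := by
  simpa [Polynomial.eval_finsetSum, bernsteinPolynomial, nsmul_eq_mul] using
    congrArg (Polynomial.eval p) (bernsteinPolynomial.sum_smul ℝ n)

lemma sum_binomTail (n : ℕ) (p : ℝ) : ∑ t ∈ Icc 1 n, binomTail n p t = n * p := by
  simp_rw [binomTail_eq_sum_ite]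
  rw [sum_comm, ← sum_binomial_mul_eq]
  refine sum_congr rfl fun k hk => ?_
  rw [natCast_eq_sum_Icc_ite (Nat.lt_succ_iff.1 (mem_range.1 hk)), sum_mul]
  simp

/-- The tangent line of `y ↦ y⁻¹` at `m`. -/
lemma two_div_sub_div_sq_le_inv {y m : ℝ} (hy : 0 < y) (hm : 0 < m) :
    2 / m - y / m ^ 2 ≤ y⁻¹ := by
  have key : y⁻¹ - (2 / m - y / m ^ 2) = (y - m) ^ 2 / (y * m ^ 2) := by
    field_simp
    ring
  have : 0 ≤ (y - m) ^ 2 / (y * m ^ 2) := by positivity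
  linarith

section

variable {Ω : Type*} [MeasurableSpace Ω] {μ : Measure Ω} {V : Ω → ℕ} {n : ℕ}

lemma integrable_comp_of_forall_le [IsFiniteMeasure μ] (hV : Measurable V) (hVn : ∀ ω, V ω ≤ n)
    (h : ℕ → ℝ) : Integrable (fun ω => h (V ω)) μ :=
  Integrable.of_bound ((measurable_from_nat (f := h)).comp hV).aestronglyMeasurable
    (∑ k ∈ range (n + 1), |h k|) (Filter.Eventually.of_forall fun ω =>
      single_le_sum (f := fun k => |h k|) (fun _ _ => abs_nonneg _)
        (mem_range.2 (Nat.lt_succ_of_le (hVn ω))))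

lemma integral_natCast_eq_sum_measureReal [IsFiniteMeasure μ] (hV : Measurable V)
    (hVn : ∀ ω, V ω ≤ n) : ∫ ω, (V ω : ℝ) ∂μ = ∑ t ∈ Icc 1 n, μ.real {ω | t ≤ V ω} := by
  have hset (t : ℕ) : MeasurableSet {ω | t ≤ V ω} := hV measurableSet_Ici
  have hind (ω : Ω) : (V ω : ℝ) = ∑ t ∈ Icc 1 n, {ω | t ≤ V ω}.indicator 1 ω := by
    simp only [Set.indicator_apply, Set.mem_ofPred_eq, Pi.one_apply]
    exact natCast_eq_sum_Icc_ite (hVn ω)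
  simp_rw [hind]
  rw [integral_finsetSum _ fun t _ => (integrable_const 1).indicator (hset t)]
  exact sum_congr rfl fun t _ => integral_indicator_one (hset t)

lemma integral_natCast_le_of_le_binomTail [IsFiniteMeasure μ] (hV : Measurable V)
    (hVn : ∀ ω, V ω ≤ n) {p : ℝ} (hp₀ : 0 ≤ p) (hp₁ : p ≤ 1)
    (hdom : ∀ t : ℕ, μ {ω | t ≤ V ω} ≤ ENNReal.ofReal (binomTail n p t)) :
    ∫ ω, (V ω : ℝ) ∂μ ≤ n * p := by
  rw [integral_natCast_eq_sum_measureReal hV hVn, ← sum_binomTail]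
  exact sum_le_sum fun t _ =>
    ENNReal.toReal_le_of_le_ofReal (binomTail_nonneg hp₀ hp₁ n t) (hdom t)

lemma one_le_integral_mul_integral_inv [IsProbabilityMeasure μ] {Y : Ω → ℝ}
    (hpos : ∀ᵐ ω ∂μ, 0 < Y ω) (hY : Integrable Y μ)
    (hYinv : Integrable (fun ω => (Y ω)⁻¹) μ) :
    1 ≤ (∫ ω, Y ω ∂μ) * ∫ ω, (Y ω)⁻¹ ∂μ := by
  set m := ∫ ω, Y ω ∂μ
  have hm : 0 < m := (integral_nonneg_of_ae (hpos.mono fun _ => le_of_lt)).lt_of_ne fun h => by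
    obtain ⟨ω, hω, h0⟩ := (hpos.and
      ((integral_eq_zero_iff_of_nonneg_ae (hpos.mono fun _ => le_of_lt) hY).1 h.symm)).exists
    exact hω.ne' h0
  have htangent : ∫ ω, (2 / m - Y ω / m ^ 2) ∂μ ≤ ∫ ω, (Y ω)⁻¹ ∂μ :=
    integral_mono_ae ((integrable_const _).sub (hY.div_const _)) hYinv
      (hpos.mono fun _ hy => two_div_sub_div_sq_le_inv hy hm)
  rw [integral_sub (integrable_const _) (hY.div_const _), integral_const, integral_div] at htangent
  simp only [probReal_univ, one_smul] at htangent
  have : 2 / m - m / m ^ 2 = m⁻¹ := by field_simp; ring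
  rwa [this, inv_le_iff_one_le_mul₀ hm, mul_comm] at htangent

end

lemma estimator_sub_eq {β N v T : ℝ} (hβ : β ≠ 0) (hv : v + T ≠ 0) :
    (1 - β) / β * (N - v) / (v + T) - v / (v + T) = (((1 - β) * N + T) * (v + T)⁻¹ - 1) / β := by
  field_simp
  ring

theorem external_fdp_estimator_conservative_general {Ω : Type*} [MeasurableSpace Ω]
    (μ : Measure Ω) [IsProbabilityMeasure μ]
    (N₀ : ℕ) (T β : ℝ) (hβ0 : 0 < β) (hβ1 : β < 1)
    (V : Ω → ℕ) (hVmeas : Measurable V) (hVN : ∀ ω, V ω ≤ N₀)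
    (hVdom : ∀ t : ℕ, μ {ω | t ≤ V ω} ≤ ENNReal.ofReal (binomTail N₀ (1 - β) t))
    (B : Ω → ℝ)
    (hB : ∀ᵐ ω ∂μ, (N₀ : ℝ) - V ω ≤ B ω)
    (hpos : ∀ᵐ ω ∂μ, 0 < (V ω : ℝ) + T)
    (hint1 : Integrable (fun ω => ((1 - β) / β) * B ω / ((V ω : ℝ) + T)) μ) :
    ∫ ω, (V ω : ℝ) / ((V ω : ℝ) + T) ∂μ
      ≤ ∫ ω, ((1 - β) / β) * B ω / ((V ω : ℝ) + T) ∂μ := by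
  have hint (h : ℕ → ℝ) : Integrable (fun ω => h (V ω)) μ :=
    integrable_comp_of_forall_le hVmeas hVN h
  have hmean : ∫ ω, ((V ω : ℝ) + T) ∂μ ≤ (1 - β) * N₀ + T := by
    rw [integral_add (hint _) (integrable_const T), integral_const, probReal_univ, one_smul]
    linarith [integral_natCast_le_of_le_binomTail hVmeas hVN (by linarith) (by linarith) hVdom]
  have hjensen :=
    one_le_integral_mul_integral_inv hpos (hint fun k => k + T) (hint fun k => (k + T)⁻¹)
  have hinv_nonneg : 0 ≤ ∫ ω, ((V ω : ℝ) + T)⁻¹ ∂μ :=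
    integral_nonneg_of_ae (hpos.mono fun _ h => (inv_pos.2 h).le)
  have hgap : 0 ≤ ∫ ω, ((1 - β) / β * ((N₀ : ℝ) - V ω) / (V ω + T) - V ω / (V ω + T)) ∂μ := by
    rw [integral_congr_ae (hpos.mono fun ω h => estimator_sub_eq hβ0.ne' h.ne'), integral_div,
      integral_sub ((hint fun k => (k + T)⁻¹).const_mul _) (integrable_const 1), integral_const_mul,
      integral_const, probReal_univ, one_smul]
    exact div_nonneg (by nlinarith) hβ0.le
  rw [integral_sub (hint fun k => (1 - β) / β * (N₀ - k) / (k + T)) (hint fun k => k / (k + T)),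
    sub_nonneg] at hgap
  refine hgap.trans (integral_mono_ae (hint fun k => (1 - β) / β * (N₀ - k) / (k + T)) hint1 ?_)
  filter_upwards [hB, hpos] with ω hBω hω
  gcongr

/-- Conservativeness of the external-comparison directional FDP estimator.
Fix `N₀ ≥ 0`, `T ≥ 0`, `β ∈ (0,1)`.  If `V` is a random variable with `0 ≤ V ≤ N₀`
and `V ≤_st Binomial(N₀, 1-β)`, `B ≥ N₀ - V` almost surely, and `V + T > 0` almost
surely, then `E[((1-β)/β)·B/(V+T)] ≥ E[V/(V+T)]`. -/
theorem external_fdp_estimator_conservative {Ω : Type*} [MeasurableSpace Ω]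
    (μ : Measure Ω) [IsProbabilityMeasure μ]
    (N₀ : ℕ) (T β : ℝ) (hβ0 : 0 < β) (hβ1 : β < 1) (hT : 0 ≤ T)
    (V : Ω → ℕ) (hVmeas : Measurable V) (hVN : ∀ ω, V ω ≤ N₀)
    (hVdom : ∀ t : ℕ, μ {ω | t ≤ V ω} ≤ ENNReal.ofReal (binomTail N₀ (1 - β) t))
    (B : Ω → ℝ) (hBmeas : Measurable B)
    (hB : ∀ᵐ ω ∂μ, (N₀ : ℝ) - V ω ≤ B ω)
    (hpos : ∀ᵐ ω ∂μ, 0 < (V ω : ℝ) + T)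
    (hint1 : Integrable (fun ω => ((1 - β) / β) * B ω / ((V ω : ℝ) + T)) μ)
    (hint2 : Integrable (fun ω => (V ω : ℝ) / ((V ω : ℝ) + T)) μ) :
    ∫ ω, (V ω : ℝ) / ((V ω : ℝ) + T) ∂μ
      ≤ ∫ ω, ((1 - β) / β) * B ω / ((V ω : ℝ) + T) ∂μ :=
  external_fdp_estimator_conservative_general μ N₀ T β hβ0 hβ1 V hVmeas hVN hVdom B hB hpos hint1
end

section
/- Let Z = (Z₁, Z₂) have the bivariate normal distribution N(μ, I₂) truncated to {z : z₁ ∈ A} for a measurable set A ⊆ ℝ of positive Gaussian measure. Let η = (η₁, η₂) with η₁ > 0, η⊥ = (η₂, -η₁), D = η·Z, M = η⊥·Z. Then conditional on M = m, D has the distribution N(η·μ, ‖η‖²) truncated to the set {d : (η₁ d + η₂ m)/‖η‖² ∈ A}. -/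
open MeasureTheory ProbabilityTheory

/-- Normalized truncation (conditioning) of a measure on `ℝ` to a set. -/
noncomputable def truncTo (ν : Measure ℝ) (S : Set ℝ) : Measure ℝ :=
  (ν S)⁻¹ • ν.restrict S

/-- Normalized truncation of a measure on `ℝ × ℝ` to a set. -/
noncomputable def truncTo2 (ν : Measure (ℝ × ℝ)) (S : Set (ℝ × ℝ)) : Measure (ℝ × ℝ) :=
  (ν S)⁻¹ • ν.restrict S

/-!
With `s = η₁² + η₂²`, the map `z ↦ (η⊥·z, η·z)` is `√s` times a rotation, so it sends
`N(μ, I₂)` to the product `N(η⊥·μ, s) ⊗ N(η·μ, s)` (compare characteristic functions) and the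
truncation set `{z | z₁ ∈ A}` to `S = {(m, d) | (η₁ d + η₂ m) / s ∈ A}`. A product measure
truncated to `S` disintegrates as its first marginal composed with the kernel truncating the
second factor to the sections `{d | (m, d) ∈ S}`, and uniqueness of disintegrations identifies
this kernel with the conditional one. The sections need positive Gaussian mass, which holds
because they are affine preimages of `A` and `A` has positive Lebesgue measure.
-/

open Complex ENNReal

lemma charFunDual_gaussianReal (m : ℝ) (v : NNReal) (L : StrongDual ℝ ℝ) :
    charFunDual (gaussianReal m v) L = cexp (L 1 * m * I - v * L 1 ^ 2 / 2) := by
  rw [← charFun_gaussianReal, charFunDual_apply, charFun_apply_real]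
  congr with x
  simpa [mul_comm] using congrArg (fun y : ℝ => cexp (y * I)) (L.map_smul x 1)

lemma gaussianReal_prod_map_rotation (μ₁ μ₂ a b : ℝ) (v : NNReal) :
    ((gaussianReal μ₁ v).prod (gaussianReal μ₂ v)).map
        (fun z => (b * z.1 - a * z.2, a * z.1 + b * z.2))
      = (gaussianReal (b * μ₁ - a * μ₂) ((a ^ 2 + b ^ 2).toNNReal * v)).prod
          (gaussianReal (a * μ₁ + b * μ₂) ((a ^ 2 + b ^ 2).toNNReal * v)) := by
  let T : (ℝ × ℝ) →L[ℝ] ℝ × ℝ :=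
    (b • ContinuousLinearMap.fst ℝ ℝ ℝ - a • ContinuousLinearMap.snd ℝ ℝ ℝ).prod
      (a • ContinuousLinearMap.fst ℝ ℝ ℝ + b • ContinuousLinearMap.snd ℝ ℝ ℝ)
  change Measure.map T _ = _
  refine Measure.ext_of_charFunDual (funext fun L => ?_)
  have hL : ∀ z : ℝ × ℝ, L z = z.1 * L (1, 0) + z.2 * L (0, 1) := fun z => by
    rw [← smul_eq_mul, ← smul_eq_mul, ← map_smul, ← map_smul, ← map_add]
    simp
  have hT₁ : T (1, 0) = (b, a) := by simp [T]
  have hT₂ : T (0, 1) = (-a, b) := by simp [T]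
  rw [charFunDual_map, charFunDual_prod, charFunDual_prod]
  simp only [charFunDual_gaussianReal, ← Complex.exp_add, ContinuousLinearMap.comp_apply,
    ContinuousLinearMap.inl_apply, ContinuousLinearMap.inr_apply, hT₁, hT₂, hL (b, a),
    hL (-a, b), NNReal.coe_mul, Real.coe_toNNReal _ (by positivity : 0 ≤ a ^ 2 + b ^ 2)]
  push_cast
  congr 1
  ring

lemma Real.volume_preimage_mul_add {a : ℝ} (ha : a ≠ 0) (b : ℝ) (A : Set ℝ) :
    volume ((fun x => a * x + b) ⁻¹' A) = ENNReal.ofReal |a⁻¹| * volume A := by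
  change volume ((fun x => a * x) ⁻¹' ((fun y => y + b) ⁻¹' A)) = _
  rw [Real.volume_preimage_mul_left ha, measure_preimage_add_right]

lemma gaussianReal_preimage_mul_add_pos (m : ℝ) {v : NNReal} (hv : v ≠ 0) {a : ℝ} (ha : a ≠ 0)
    (b : ℝ) {A : Set ℝ} (hA : 0 < volume A) :
    0 < gaussianReal m v ((fun x => a * x + b) ⁻¹' A) := by
  refine (gaussianReal_absolutelyContinuous' m hv).pos_mono ?_
  rw [Real.volume_preimage_mul_add ha]
  exact ENNReal.mul_pos (by simpa using ha) hA.ne'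

section Truncation

variable {ν : Measure ℝ} {T : Set ℝ}

lemma truncTo_apply {E : Set ℝ} (hE : MeasurableSet E) : truncTo ν T E = (ν T)⁻¹ * ν (E ∩ T) := by
  rw [truncTo, Measure.smul_apply, Measure.restrict_apply hE, smul_eq_mul]

lemma measure_mul_truncTo_apply (hT : ν T ≠ ∞) {E : Set ℝ} (hE : MeasurableSet E) :
    ν T * truncTo ν T E = ν (E ∩ T) := by
  rcases eq_or_ne (ν T) 0 with h0 | h0
  · rw [h0, zero_mul, measure_mono_null Set.inter_subset_right h0]
  · rw [truncTo_apply hE, ← mul_assoc, ENNReal.mul_inv_cancel h0 hT, one_mul]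

lemma truncTo_univ_le_one : truncTo ν T Set.univ ≤ 1 := by
  rw [truncTo_apply MeasurableSet.univ, Set.univ_inter]
  exact ENNReal.inv_mul_le_one _

lemma isProbabilityMeasure_truncTo (h0 : ν T ≠ 0) (hT : ν T ≠ ∞) :
    IsProbabilityMeasure (truncTo ν T) :=
  ⟨by rw [truncTo_apply MeasurableSet.univ, Set.univ_inter, ENNReal.inv_mul_cancel h0 hT]⟩

end Truncation

instance (ν : Measure (ℝ × ℝ)) (S : Set (ℝ × ℝ)) : IsFiniteMeasure (truncTo2 ν S) := by
  refine ⟨lt_of_le_of_lt ?_ ENNReal.one_lt_top⟩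
  rw [truncTo2, Measure.smul_apply, Measure.restrict_apply MeasurableSet.univ, Set.univ_inter,
    smul_eq_mul]
  exact ENNReal.inv_mul_le_one _

lemma map_truncTo2_preimage (ν : Measure (ℝ × ℝ)) {f : ℝ × ℝ → ℝ × ℝ} (hf : Measurable f)
    {S : Set (ℝ × ℝ)} (hS : MeasurableSet S) :
    (truncTo2 ν (f ⁻¹' S)).map f = truncTo2 (ν.map f) S := by
  rw [truncTo2, truncTo2, Measure.map_smul, ← Measure.restrict_map hf hS,
    Measure.map_apply hf hS]

noncomputable def truncToSectionKernel (ν : Measure ℝ) [SFinite ν] {S : Set (ℝ × ℝ)}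
    (hS : MeasurableSet S) : Kernel ℝ ℝ where
  toFun m := truncTo ν (Prod.mk m ⁻¹' S)
  measurable' := by
    refine Measure.measurable_of_measurable_coe _ fun E hE => ?_
    simp_rw [truncTo_apply hE]
    exact (measurable_measure_prodMk_left hS).inv.mul
      (measurable_measure_prodMk_left ((measurable_snd hE).inter hS))

section SectionKernel

variable (ν₁ ν₂ : Measure ℝ) [SFinite ν₁] [IsFiniteMeasure ν₂] {S : Set (ℝ × ℝ)}

instance (hS : MeasurableSet S) : IsFiniteKernel (truncToSectionKernel ν₂ hS) :=
  ⟨⟨1, ENNReal.one_lt_top, fun _ => truncTo_univ_le_one⟩⟩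

lemma restrict_prod_eq_withDensity_compProd (hS : MeasurableSet S) :
    (ν₁.prod ν₂).restrict S
      = ν₁.withDensity (fun m => ν₂ (Prod.mk m ⁻¹' S)) ⊗ₘ truncToSectionKernel ν₂ hS := by
  ext E hE
  rw [Measure.compProd_apply hE, lintegral_withDensity_eq_lintegral_mul _
      (measurable_measure_prodMk_left hS) (Kernel.measurable_kernel_prodMk_left hE),
    Measure.restrict_apply hE, Measure.prod_apply (hE.inter hS)]
  refine lintegral_congr fun m => ?_
  exact (measure_mul_truncTo_apply (measure_ne_top _ _) (measurable_prodMk_left hE)).symm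

lemma ae_condKernel_truncTo2_prod (hS : MeasurableSet S) (hpos : ∀ m, ν₂ (Prod.mk m ⁻¹' S) ≠ 0) :
    ∀ᵐ m ∂(truncTo2 (ν₁.prod ν₂) S).fst,
      (truncTo2 (ν₁.prod ν₂) S).condKernel m = truncTo ν₂ (Prod.mk m ⁻¹' S) := by
  have : IsMarkovKernel (truncToSectionKernel ν₂ hS) :=
    ⟨fun m => isProbabilityMeasure_truncTo (hpos m) (measure_ne_top _ _)⟩
  have hdisint : truncTo2 (ν₁.prod ν₂) S
      = (((ν₁.prod ν₂) S)⁻¹ • ν₁.withDensity (fun m => ν₂ (Prod.mk m ⁻¹' S)))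
          ⊗ₘ truncToSectionKernel ν₂ hS := by
    rw [Measure.compProd_smul_left, ← restrict_prod_eq_withDensity_compProd, truncTo2]
  have hfst := congrArg Measure.fst hdisint
  rw [Measure.fst_compProd] at hfst
  rw [← hfst] at hdisint
  filter_upwards [eq_condKernel_of_measure_eq_compProd _ hdisint] with m hm
  exact hm.symm

end SectionKernel

/-- Let `Z = (Z₁, Z₂) ~ N(μ, I₂)` truncated to `{z : z₁ ∈ A}` for measurable `A` of
positive Gaussian measure, and let `η = (η₁, η₂)` with `η₁ > 0`, `η⊥ = (η₂, -η₁)`,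
`D = η·Z`, `M = η⊥·Z`.  Then, conditional on `M = m`, `D` has the `N(η·μ, ‖η‖²)`
distribution truncated to `{d : (η₁ d + η₂ m)/‖η‖² ∈ A}`.  The conditional law is
expressed via the disintegration kernel of the joint law of `(M, D)`. -/
theorem selective_conditional_law (μ₁ μ₂ η₁ η₂ : ℝ) (hη₁ : 0 < η₁)
    (A : Set ℝ) (hA : MeasurableSet A) (hApos : 0 < gaussianReal μ₁ 1 A)
    (μZ : Measure (ℝ × ℝ))
    (hμZ : μZ = truncTo2 ((gaussianReal μ₁ 1).prod (gaussianReal μ₂ 1)) {z | z.1 ∈ A})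
    (ρ : Measure (ℝ × ℝ))
    (hρ : ρ = μZ.map (fun z => (η₂ * z.1 - η₁ * z.2, η₁ * z.1 + η₂ * z.2)))
    [IsFiniteMeasure ρ] :
    ∀ᵐ m ∂ρ.fst,
      ρ.condKernel m
        = truncTo (gaussianReal (η₁ * μ₁ + η₂ * μ₂) ((η₁ ^ 2 + η₂ ^ 2).toNNReal))
            {d | (η₁ * d + η₂ * m) / (η₁ ^ 2 + η₂ ^ 2) ∈ A} := by
  have hs : 0 < η₁ ^ 2 + η₂ ^ 2 := by positivity
  set S : Set (ℝ × ℝ) := {p | (η₁ * p.2 + η₂ * p.1) / (η₁ ^ 2 + η₂ ^ 2) ∈ A}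
  have hS : MeasurableSet S := by measurability
  have hpre : (fun z : ℝ × ℝ => (η₂ * z.1 - η₁ * z.2, η₁ * z.1 + η₂ * z.2)) ⁻¹' S
      = {z | z.1 ∈ A} := by
    ext z
    simp only [S, Set.mem_preimage, Set.mem_ofPred_eq]
    rw [show (η₁ * (η₁ * z.1 + η₂ * z.2) + η₂ * (η₂ * z.1 - η₁ * z.2)) / (η₁ ^ 2 + η₂ ^ 2)
      = z.1 by field_simp; ring]
  obtain rfl : ρ = truncTo2 ((gaussianReal (η₂ * μ₁ - η₁ * μ₂) (η₁ ^ 2 + η₂ ^ 2).toNNReal).prod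
      (gaussianReal (η₁ * μ₁ + η₂ * μ₂) (η₁ ^ 2 + η₂ ^ 2).toNNReal)) S := by
    rw [hρ, hμZ, ← hpre, map_truncTo2_preimage _ (by fun_prop) hS,
      gaussianReal_prod_map_rotation, mul_one]
  have hvolA : 0 < volume A := (gaussianReal_absolutelyContinuous μ₁ one_ne_zero).pos_mono hApos
  refine ae_condKernel_truncTo2_prod _ _ hS fun m => ?_
  have hsection : Prod.mk m ⁻¹' S
      = (fun d => η₁ / (η₁ ^ 2 + η₂ ^ 2) * d + η₂ * m / (η₁ ^ 2 + η₂ ^ 2)) ⁻¹' A := by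
    ext d
    simp only [S, Set.mem_preimage, Set.mem_ofPred_eq, add_div, mul_div_right_comm]
  rw [hsection]
  exact (gaussianReal_preimage_mul_add_pos _ (by simpa using hs) (by positivity) _ hvolA).ne'
end
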